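/- Let 1/2 < η < 1, let Ṽ_η be the normalised Wolbachia operator, and let s = (x₁⁽⁰⁾,x₂⁽⁰⁾,x₃⁽⁰⁾,u⁽⁰⁾) ∈ S^{3,1}. Write (x₁⁽ᵏ⁾,x₂⁽ᵏ⁾,x₃⁽ᵏ⁾,u⁽ᵏ⁾) = Ṽ_η^k(s) for the trajectory (which stays in S^{3,1}). Then: (i) 1/2 ≤ x₁⁽ᵏ⁾ + x₂⁽ᵏ⁾ ≤ η for all k ≥ 1; (ii) x₃⁽ᵏ⁾ ≤ η and x₃⁽ᵏ⁺¹⁾ ≤ x₃⁽ᵏ⁾ for all k ≥ 1; (iii) there exists n₀ ∈ ℕ such that x₂⁽ᵏ⁾ + (1+η) x₃⁽ᵏ⁾ ≤ 2η (x₂⁽ᵏ⁾ + x₃⁽ᵏ⁾) for all k ≥ n₀; (iv) there exists m₀ ∈ ℕ such that x₁⁽ᵏ⁺¹⁾ ≥ x₁⁽ᵏ⁾ for all k ≥ m₀. -/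

import Mathlib

/-!
Write `(a, b, c, d)` for a point of `S31`, `α = a + b + c`, and primes for its image.
Then `a' + b' = (2ηa + b + c) / (2α)` lies in `[1/2, η]`, and `c' / (b' + c') = η c / (b + c)`:
the ratio `(b + c) / c` is multiplied by `1/η > 1` at every step, so it eventually exceeds
`η / (2η - 1)`, which is inequality (iii). Inequality (iii) at a point says exactly `α' ≤ η`
at its image, and `α ≤ η` forces `a' = η (2a + c) / (2α) ≥ a`, which gives (iv).
-/

/-- The normalised Wolbachia gonosomal operator with parameter `η`
(defined for points whose first three coordinates have positive sum). -/
noncomputable def nWolbOp (η : ℝ) (p : ℝ × ℝ × ℝ × ℝ) : ℝ × ℝ × ℝ × ℝ :=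
  (η * (2 * p.1 + p.2.2.1) / (2 * (p.1 + p.2.1 + p.2.2.1)),
   (p.2.1 + (1 - η) * p.2.2.1) / (2 * (p.1 + p.2.1 + p.2.2.1)),
   η * p.2.2.1 / (2 * (p.1 + p.2.1 + p.2.2.1)),
   ((1 - η) * (2 * p.1 + p.2.2.1) + p.2.1) / (2 * (p.1 + p.2.1 + p.2.2.1)))

/-- The set `S^{3,1}` of frequency distributions. -/
def S31 : Set (ℝ × ℝ × ℝ × ℝ) :=
  {p | 0 ≤ p.1 ∧ 0 ≤ p.2.1 ∧ 0 ≤ p.2.2.1 ∧ 0 ≤ p.2.2.2 ∧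
       0 < p.1 + p.2.1 + p.2.2.1 ∧ 0 < p.2.2.2 ∧
       p.1 + p.2.1 + p.2.2.1 + p.2.2.2 = 1}

section Dynamics

variable {η : ℝ} {p : ℝ × ℝ × ℝ × ℝ}

lemma mapsTo_nWolbOp_S31 (h0 : 0 < η) (h1 : η < 1) : Set.MapsTo (nWolbOp η) S31 S31 := by
  rintro ⟨a, b, c, d⟩ ⟨ha, hb, hc, -, hα, -, -⟩
  dsimp only at ha hb hc hα
  have hT : 0 < 2 * (a + b + c) := by linarith
  have hb' : 0 ≤ b + (1 - η) * c := by nlinarith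
  have hd' : 0 < (1 - η) * (2 * a + c) + b := by nlinarith
  refine ⟨?_, ?_, ?_, ?_, ?_, ?_, ?_⟩ <;> simp only [nWolbOp]
  · positivity
  · positivity
  · positivity
  · positivity
  · rw [← add_div, ← add_div, lt_div_iff₀ hT]
    nlinarith
  · positivity
  · field_simp
    ring

lemma nWolbOp_fst_add_snd_mem_Icc (hη : 1 / 2 ≤ η) (hp : p ∈ S31) :
    (nWolbOp η p).1 + (nWolbOp η p).2.1 ∈ Set.Icc (1 / 2) η := by
  obtain ⟨a, b, c, d⟩ := p
  obtain ⟨ha, hb, hc, -, hα, -, -⟩ := hp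
  dsimp only at ha hb hc hα
  have hT : 0 < 2 * (a + b + c) := by linarith
  simp only [nWolbOp, Set.mem_Icc]
  rw [← add_div, le_div_iff₀ hT, div_le_iff₀ hT]
  constructor <;> nlinarith

lemma nWolbOp_thd_le (hη : 0 ≤ η) (hp : p ∈ S31) : (nWolbOp η p).2.2.1 ≤ η := by
  obtain ⟨a, b, c, d⟩ := p
  obtain ⟨ha, hb, hc, -, hα, -, -⟩ := hp
  dsimp only at ha hb hc hα
  simp only [nWolbOp]
  rw [div_le_iff₀ (by linarith)]
  nlinarith

lemma nWolbOp_thd_le_thd (hp : p ∈ S31) (hα : η ≤ 2 * (p.1 + p.2.1 + p.2.2.1)) :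
    (nWolbOp η p).2.2.1 ≤ p.2.2.1 := by
  simp only [nWolbOp]
  rw [div_le_iff₀ (by linarith [hp.2.2.2.2.1])]
  nlinarith [hp.2.2.1]

lemma div_mul_nWolbOp_thd_le (hη : η ≠ 0) (hp : p ∈ S31) {C : ℝ}
    (hC : C * p.2.2.1 ≤ p.2.1 + p.2.2.1) :
    C / η * (nWolbOp η p).2.2.1 ≤ (nWolbOp η p).2.1 + (nWolbOp η p).2.2.1 := by
  have hT : 0 < 2 * (p.1 + p.2.1 + p.2.2.1) := by linarith [hp.2.2.2.2.1]
  simp only [nWolbOp]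
  have hcancel : C / η * (η * p.2.2.1 / (2 * (p.1 + p.2.1 + p.2.2.1))) =
      C * p.2.2.1 / (2 * (p.1 + p.2.1 + p.2.2.1)) := by
    field_simp
  rw [hcancel, ← add_div, div_le_div_iff_of_pos_right hT]
  linarith

lemma nWolbOp_fst_add_snd_add_thd_le (hp : p ∈ S31)
    (h : p.2.1 + (1 + η) * p.2.2.1 ≤ 2 * η * (p.2.1 + p.2.2.1)) :
    (nWolbOp η p).1 + (nWolbOp η p).2.1 + (nWolbOp η p).2.2.1 ≤ η := by
  simp only [nWolbOp]
  rw [← add_div, ← add_div, div_le_iff₀ (by linarith [hp.2.2.2.2.1])]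
  linarith

lemma le_nWolbOp_fst (hp : p ∈ S31) (hα : p.1 + p.2.1 + p.2.2.1 ≤ η) :
    p.1 ≤ (nWolbOp η p).1 := by
  obtain ⟨ha, -, hc, -, hα₀, -, -⟩ := hp
  simp only [nWolbOp]
  rw [le_div_iff₀ (by linarith)]
  nlinarith

lemma inv_pow_mul_iterate_thd_le (h0 : 0 < η) (h1 : η < 1) (hp : p ∈ S31) (k : ℕ) :
    η⁻¹ ^ k * ((nWolbOp η)^[k] p).2.2.1 ≤
      ((nWolbOp η)^[k] p).2.1 + ((nWolbOp η)^[k] p).2.2.1 := by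
  induction k with
  | zero => simpa using hp.2.1
  | succ k ih =>
    rw [pow_succ, ← div_eq_mul_inv, Function.iterate_succ_apply']
    exact div_mul_nWolbOp_thd_le h0.ne' ((mapsTo_nWolbOp_S31 h0 h1).iterate k hp) ih

lemma eventually_iterate_snd_add_thd_le (h1 : 1 / 2 < η) (h2 : η < 1) (hp : p ∈ S31) :
    ∀ᶠ k in Filter.atTop,
      ((nWolbOp η)^[k] p).2.1 + (1 + η) * ((nWolbOp η)^[k] p).2.2.1 ≤
        2 * η * (((nWolbOp η)^[k] p).2.1 + ((nWolbOp η)^[k] p).2.2.1) := by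
  have h0 : 0 < η := by linarith
  have hgrowth : ∀ᶠ k in Filter.atTop, η / (2 * η - 1) ≤ η⁻¹ ^ k :=
    (tendsto_pow_atTop_atTop_of_one_lt ((one_lt_inv₀ h0).mpr h2)).eventually_ge_atTop _
  filter_upwards [hgrowth] with k hk
  rw [div_le_iff₀ (by linarith)] at hk
  have hc := ((mapsTo_nWolbOp_S31 h0 h2).iterate k hp).2.2.1
  have hratio := inv_pow_mul_iterate_thd_le h0 h2 hp k
  -- `η c ≤ (2η - 1) η⁻ᵏ c ≤ (2η - 1) (b + c)`, which rearranges to the claim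
  nlinarith [mul_le_mul_of_nonneg_right hk hc,
    mul_le_mul_of_nonneg_left hratio (by linarith : 0 ≤ 2 * η - 1)]

end Dynamics

theorem nWolbOp_trajectory_inequalities (η : ℝ) (h1 : 1 / 2 < η) (h2 : η < 1)
    (s : ℝ × ℝ × ℝ × ℝ) (hs : s ∈ S31) :
    (∀ k : ℕ, 1 ≤ k →
        1 / 2 ≤ ((nWolbOp η)^[k] s).1 + ((nWolbOp η)^[k] s).2.1 ∧
        ((nWolbOp η)^[k] s).1 + ((nWolbOp η)^[k] s).2.1 ≤ η) ∧
    (∀ k : ℕ, 1 ≤ k →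
        ((nWolbOp η)^[k] s).2.2.1 ≤ η ∧
        ((nWolbOp η)^[k + 1] s).2.2.1 ≤ ((nWolbOp η)^[k] s).2.2.1) ∧
    (∃ n0 : ℕ, ∀ k : ℕ, n0 ≤ k →
        ((nWolbOp η)^[k] s).2.1 + (1 + η) * ((nWolbOp η)^[k] s).2.2.1 ≤
          2 * η * (((nWolbOp η)^[k] s).2.1 + ((nWolbOp η)^[k] s).2.2.1)) ∧
    (∃ m0 : ℕ, ∀ k : ℕ, m0 ≤ k →
        ((nWolbOp η)^[k] s).1 ≤ ((nWolbOp η)^[k + 1] s).1) := by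
  have h0 : 0 < η := by linarith
  have hmem (k : ℕ) : (nWolbOp η)^[k] s ∈ S31 := (mapsTo_nWolbOp_S31 h0 h2).iterate k hs
  have hsum (k : ℕ) (hk : 1 ≤ k) :
      ((nWolbOp η)^[k] s).1 + ((nWolbOp η)^[k] s).2.1 ∈ Set.Icc (1 / 2) η := by
    obtain ⟨j, rfl⟩ := Nat.exists_eq_add_of_le' hk
    rw [Function.iterate_succ_apply']
    exact nWolbOp_fst_add_snd_mem_Icc h1.le (hmem j)
  obtain ⟨n0, hn0⟩ := Filter.eventually_atTop.mp (eventually_iterate_snd_add_thd_le h1 h2 hs)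
  refine ⟨hsum, fun k hk => ⟨?_, ?_⟩, ⟨n0, hn0⟩, ⟨n0 + 1, fun k hk => ?_⟩⟩
  · obtain ⟨j, rfl⟩ := Nat.exists_eq_add_of_le' hk
    rw [Function.iterate_succ_apply']
    exact nWolbOp_thd_le h0.le (hmem j)
  · rw [Function.iterate_succ_apply']
    exact nWolbOp_thd_le_thd (hmem k) (by linarith [(hsum k hk).1, h2, (hmem k).2.2.1])
  · obtain ⟨j, rfl⟩ := Nat.exists_eq_add_of_le' (le_of_add_le_right hk)
    have hα := nWolbOp_fst_add_snd_add_thd_le (hmem j) (hn0 j (by omega))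
    rw [← Function.iterate_succ_apply' (nWolbOp η)] at hα
    rw [Function.iterate_succ_apply' (nWolbOp η) (j + 1)]
    exact le_nWolbOp_fst (hmem (j + 1)) hα
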